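/- Fix q ∈ (0,1), a half-integer J, an integer R ≥ 1, and an integer n with 1 ≤ n ≤ 2JR. For 0 ≤ j ≤ 2J, let Z_j² = Σ over spin configurations σ : [−R+1,R]×[1,2J] → {−1/2, +1/2} having exactly n down spins in total and exactly j down spins among the sites (R,1),…,(R,2J), of Π_{(α,k)} q^{−2α σ(α,k)}. Then for every 0 ≤ j ≤ 2J−1, Z_{j+1}² ≤ 4J²R q^{2R} Z_j². -/

import Mathlib

/-!
Moving one down spin from the rightmost rung (`α = R`) to an up site of the left half
(`α ≤ 0`) sends a configuration counted by `Z_{j+1}²` to one counted by `Z_j²` and multiplies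
its weight by at least `q^{-2R}`. A configuration is recovered from its image and the two sites
involved, and there are at most `2J · 2JR` such pairs of sites.
-/

open scoped BigOperators Classical

noncomputable section

namespace XXZ

/-- `m`-value of the basis index `k` for spin `J = twoJ/2`: `m = k - twoJ/2`. -/
def mval (twoJ : ℕ) (k : Fin (twoJ + 1)) : ℝ := (k : ℝ) - (twoJ : ℝ) / 2

/-- The third spin matrix `S³` for spin `J = twoJ/2`. -/
def S3 (twoJ : ℕ) : Matrix (Fin (twoJ + 1)) (Fin (twoJ + 1)) ℂ :=
  Matrix.diagonal fun k => ((mval twoJ k : ℝ) : ℂ)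

/-- The raising operator `S⁺`. -/
def Splus (twoJ : ℕ) : Matrix (Fin (twoJ + 1)) (Fin (twoJ + 1)) ℂ :=
  Matrix.of fun k' k => if (k' : ℕ) = (k : ℕ) + 1 then
    ((Real.sqrt ((twoJ : ℝ) / 2 * ((twoJ : ℝ) / 2 + 1) - mval twoJ k * (mval twoJ k + 1)) : ℝ) : ℂ)
  else 0

/-- The lowering operator `S⁻`. -/
def Sminus (twoJ : ℕ) : Matrix (Fin (twoJ + 1)) (Fin (twoJ + 1)) ℂ :=
  Matrix.of fun k' k => if (k' : ℕ) + 1 = (k : ℕ) then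
    ((Real.sqrt ((twoJ : ℝ) / 2 * ((twoJ : ℝ) / 2 + 1) - mval twoJ k * (mval twoJ k - 1)) : ℝ) : ℂ)
  else 0

/-- `S¹ = (S⁺ + S⁻)/2`. -/
def S1 (twoJ : ℕ) : Matrix (Fin (twoJ + 1)) (Fin (twoJ + 1)) ℂ :=
  (2 : ℂ)⁻¹ • (Splus twoJ + Sminus twoJ)

/-- `S² = (S⁺ - S⁻)/(2i)`. -/
def S2 (twoJ : ℕ) : Matrix (Fin (twoJ + 1)) (Fin (twoJ + 1)) ℂ :=
  (2 * Complex.I)⁻¹ • (Splus twoJ - Sminus twoJ)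

/-- A single-site operator `A` acting at the site `α` of a many-site system. -/
def oneSite {ι : Type*} [Fintype ι] [DecidableEq ι] {d : ℕ}
    (A : Matrix (Fin d) (Fin d) ℂ) (α : ι) :
    Matrix (ι → Fin d) (ι → Fin d) ℂ :=
  Matrix.of fun σ τ => A (σ α) (τ α) *
    ∏ β ∈ Finset.univ.filter (fun β => β ≠ α), (if σ β = τ β then (1 : ℂ) else 0)

/-- The XXZ interaction `h^J(α,β)` for spin `J = twoJ/2` with anisotropy `Δ`:
`h = J²·1 − S³_α S³_β − Δ⁻¹(S¹_α S¹_β + S²_α S²_β) + J√(1−Δ⁻²)(S³_α − S³_β)`. -/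
def hInt (twoJ : ℕ) (Δ : ℝ) {ι : Type*} [Fintype ι] [DecidableEq ι] (α β : ι) :
    Matrix (ι → Fin (twoJ + 1)) (ι → Fin (twoJ + 1)) ℂ :=
  ((((twoJ : ℝ) / 2) ^ 2 : ℝ) : ℂ) • (1 : Matrix (ι → Fin (twoJ + 1)) (ι → Fin (twoJ + 1)) ℂ)
    - oneSite (S3 twoJ) α * oneSite (S3 twoJ) β
    - ((Δ⁻¹ : ℝ) : ℂ) • (oneSite (S1 twoJ) α * oneSite (S1 twoJ) β
        + oneSite (S2 twoJ) α * oneSite (S2 twoJ) β)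
    + (((twoJ : ℝ) / 2 * Real.sqrt (1 - Δ⁻¹ ^ 2) : ℝ) : ℂ) •
        (oneSite (S3 twoJ) α - oneSite (S3 twoJ) β)

/-- The spin-`J` XXZ chain Hamiltonian `H^J_{[1,L]} = Σ_{α=1}^{L-1} h^J(α,α+1)`. -/
def Hchain (twoJ L : ℕ) (Δ : ℝ) :
    Matrix (Fin L → Fin (twoJ + 1)) (Fin L → Fin (twoJ + 1)) ℂ :=
  ∑ x : Fin L, if h : (x : ℕ) + 1 < L then hInt twoJ Δ x ⟨(x : ℕ) + 1, h⟩ else 0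

/-- Total third component of spin `S³_tot = Σ_α S³_α`. -/
def S3tot (twoJ : ℕ) {ι : Type*} [Fintype ι] [DecidableEq ι] :
    Matrix (ι → Fin (twoJ + 1)) (ι → Fin (twoJ + 1)) ℂ :=
  ∑ α : ι, oneSite (S3 twoJ) α

/-- The standard inner product, antilinear in the first argument. -/
def ip {n : Type*} [Fintype n] (v w : n → ℂ) : ℂ :=
  ∑ i, (starRingEnd ℂ) (v i) * w i

/-- `ψ` lies in the sector of total `S³`-eigenvalue `M`. -/
def inSector (twoJ : ℕ) {ι : Type*} [Fintype ι] [DecidableEq ι]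
    (M : ℝ) (ψ : (ι → Fin (twoJ + 1)) → ℂ) : Prop :=
  (S3tot twoJ).mulVec ψ = (M : ℂ) • ψ

/-- The spectral gap `γ([1,L],J,M)`: the infimum of the Rayleigh quotient of `H^J_{[1,L]}`
over nonzero vectors of the sector `M` orthogonal to the kernel of `H^J_{[1,L]}` in that
sector. -/
def gap (twoJ L : ℕ) (Δ M : ℝ) : ℝ :=
  sInf { r : ℝ | ∃ ψ : (Fin L → Fin (twoJ + 1)) → ℂ, ψ ≠ 0 ∧
    inSector twoJ M ψ ∧
    (∀ φ : (Fin L → Fin (twoJ + 1)) → ℂ,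
      (Hchain twoJ L Δ).mulVec φ = 0 → inSector twoJ M φ → ip φ ψ = 0) ∧
    r = (ip ψ ((Hchain twoJ L Δ).mulVec ψ)).re / (ip ψ ψ).re }

/-- The sites of the interval `[-R+1, R] ⊆ ℤ`. -/
abbrev RSite (R : ℕ) : Type := ↥(Finset.Icc (-(R : ℤ) + 1) (R : ℤ))

/-- The squared weight `W(σ)² = Π_{(α,k)} q^{-2α σ(α,k)}` of a spin configuration on the
ladder `[-R+1,R] × [1,2J]`. -/
def Wsq (q : ℝ) (twoJ R : ℕ) (σ : (RSite R × Fin twoJ) → Fin (1 + 1)) : ℝ :=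
  ∏ p : RSite R × Fin twoJ, q ^ (-2 * ((p.1 : ℤ) : ℝ) * mval 1 (σ p))

/-- The total number of down spins of `σ`. -/
def nDown (twoJ R : ℕ) (σ : (RSite R × Fin twoJ) → Fin (1 + 1)) : ℕ :=
  (Finset.univ.filter (fun p : RSite R × Fin twoJ => σ p = 0)).card

/-- The number of down spins of `σ` in the rightmost rung `{R} × [1,2J]`. -/
def jDownRight (twoJ R : ℕ) (σ : (RSite R × Fin twoJ) → Fin (1 + 1)) : ℕ :=
  (Finset.univ.filter
    (fun p : RSite R × Fin twoJ => σ p = 0 ∧ ((p.1 : ℤ) = (R : ℤ)))).card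

/-- The number of down spins of `σ` in the leftmost rung `{-R+1} × [1,2J]`. -/
def jDownLeft (twoJ R : ℕ) (σ : (RSite R × Fin twoJ) → Fin (1 + 1)) : ℕ :=
  (Finset.univ.filter
    (fun p : RSite R × Fin twoJ => σ p = 0 ∧ ((p.1 : ℤ) = -(R : ℤ) + 1))).card

/-- `Z_j² = Σ_{σ : n down spins, j of them in the rightmost rung} W(σ)²`. -/
def Zsq (q : ℝ) (twoJ R n j : ℕ) : ℝ :=
  ∑ σ : (RSite R × Fin twoJ) → Fin (1 + 1),
    if nDown twoJ R σ = n ∧ jDownRight twoJ R σ = j then Wsq q twoJ R σ else 0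

section WeightedCounting

variable {α β γ M : Type*} [AddCommMonoid M] [PartialOrder M] [IsOrderedAddMonoid M]

theorem _root_.Finset.sum_le_card_nsmul_sum_of_decode [DecidableEq α] {s : Finset α} {t : Finset β}
    {u : Finset γ} (w : α → M) (v : β → M) (hv : ∀ b ∈ t, 0 ≤ v b) (decode : β × γ → α)
    (h : ∀ a ∈ s, ∃ x ∈ t ×ˢ u, decode x = a ∧ w a ≤ v x.1) :
    ∑ a ∈ s, w a ≤ u.card • ∑ b ∈ t, v b := by
  set D := (t ×ˢ u).filter (fun x => decode x ∈ s)
  have hv' : ∀ x ∈ t ×ˢ u, 0 ≤ v x.1 := fun x hx => hv _ (Finset.mem_product.mp hx).1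
  calc ∑ a ∈ s, w a
      ≤ ∑ a ∈ s, ∑ x ∈ D with decode x = a, v x.1 := by
        refine Finset.sum_le_sum fun a ha => ?_
        obtain ⟨x, hx, rfl, hwx⟩ := h a ha
        refine hwx.trans (Finset.single_le_sum (f := fun x : β × γ => v x.1) (fun y hy => ?_) ?_)
        · exact hv' y (Finset.mem_filter.mp (Finset.mem_filter.mp hy).1).1
        · simp [D, hx, ha]
    _ = ∑ x ∈ D, v x.1 :=
        Finset.sum_fiberwise_of_maps_to (fun x hx => (Finset.mem_filter.mp hx).2) _
    _ ≤ ∑ x ∈ t ×ˢ u, v x.1 :=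
        Finset.sum_le_sum_of_subset_of_nonneg (Finset.filter_subset _ _)
          fun x hx _ => hv' x hx
    _ = u.card • ∑ b ∈ t, v b := by
        rw [Finset.sum_product, Finset.smul_sum]
        simp

end WeightedCounting

section Ladder

variable {twoJ R : ℕ}

def hop (σ : RSite R × Fin twoJ → Fin (1 + 1)) (p p' : RSite R × Fin twoJ) :
    RSite R × Fin twoJ → Fin (1 + 1) :=
  Function.update (Function.update σ p 1) p' 0

lemma hop_hop_eq_self {σ : RSite R × Fin twoJ → Fin (1 + 1)} {p p' : RSite R × Fin twoJ}
    (hp : σ p = 0) (hp' : σ p' = 1) : hop (hop σ p p') p' p = σ := by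
  have hne : p' ≠ p := fun h => by simp [h, hp] at hp'
  funext x
  by_cases hxp : x = p
  · subst hxp; simp [hop, hp]
  · by_cases hxp' : x = p'
    · subst hxp'; simp [hop, hp', hne]
    · simp [hop, hxp, hxp']

lemma filter_hop_eq_insert_erase {σ : RSite R × Fin twoJ → Fin (1 + 1)} {p p' : RSite R × Fin twoJ}
    (hp : σ p = 0) (hp' : σ p' = 1) :
    Finset.univ.filter (fun x => hop σ p p' x = 0)
      = insert p' ((Finset.univ.filter fun x => σ x = 0).erase p) := by
  ext x
  rw [Finset.mem_filter, hop]
  by_cases hxp' : x = p'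
  · subst hxp'; simp
  · by_cases hxp : x = p
    · subst hxp; simp [hxp']
    · simp [hxp, hxp']

lemma nDown_hop {σ : RSite R × Fin twoJ → Fin (1 + 1)} {p p' : RSite R × Fin twoJ}
    (hp : σ p = 0) (hp' : σ p' = 1) : nDown twoJ R (hop σ p p') = nDown twoJ R σ := by
  have hmem : p ∈ Finset.univ.filter fun x => σ x = 0 := by simp [hp]
  rw [nDown, filter_hop_eq_insert_erase hp hp', Finset.card_insert_of_notMem (by simp [hp']),
    Finset.card_erase_add_one hmem, nDown]

def rightRung (twoJ R : ℕ) : Finset (RSite R × Fin twoJ) :=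
  Finset.univ.filter fun x => (x.1 : ℤ) = R

def leftHalf (twoJ R : ℕ) : Finset (RSite R × Fin twoJ) :=
  Finset.univ.filter fun x => (x.1 : ℤ) ≤ 0

lemma jDownRight_eq_card (σ : RSite R × Fin twoJ → Fin (1 + 1)) :
    jDownRight twoJ R σ = ((Finset.univ.filter fun x => σ x = 0) ∩ rightRung twoJ R).card := by
  rw [jDownRight, rightRung, Finset.filter_and]

lemma jDownRight_hop {σ : RSite R × Fin twoJ → Fin (1 + 1)} {p p' : RSite R × Fin twoJ}
    (hp : σ p = 0) (hp' : σ p' = 1) (hpR : p ∈ rightRung twoJ R) (hp'R : p' ∉ rightRung twoJ R) :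
    jDownRight twoJ R (hop σ p p') + 1 = jDownRight twoJ R σ := by
  rw [jDownRight_eq_card, jDownRight_eq_card, filter_hop_eq_insert_erase hp hp',
    Finset.insert_inter_of_notMem hp'R, Finset.erase_inter, Finset.card_erase_add_one (by simp [hp, hpR])]

def magMoment (σ : RSite R × Fin twoJ → Fin (1 + 1)) : ℝ :=
  ∑ x, ((x.1 : ℤ) : ℝ) * mval 1 (σ x)

lemma Wsq_pos {q : ℝ} (hq : 0 < q) (σ : RSite R × Fin twoJ → Fin (1 + 1)) :
    0 < Wsq q twoJ R σ :=
  Finset.prod_pos fun _ _ => Real.rpow_pos_of_pos hq _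

lemma Wsq_eq_rpow_magMoment {q : ℝ} (hq : 0 < q) (σ : RSite R × Fin twoJ → Fin (1 + 1)) :
    Wsq q twoJ R σ = q ^ (-2 * magMoment σ) := by
  rw [Wsq, magMoment, Finset.mul_sum, Real.rpow_sum_of_pos hq]
  simp only [mul_assoc]

lemma magMoment_update (σ : RSite R × Fin twoJ → Fin (1 + 1)) (i : RSite R × Fin twoJ)
    (b : Fin (1 + 1)) :
    magMoment (Function.update σ i b)
      = magMoment σ + ((i.1 : ℤ) : ℝ) * (mval 1 b - mval 1 (σ i)) := by
  have hrest : ∑ x ∈ Finset.univ.erase i, ((x.1 : ℤ) : ℝ) * mval 1 (Function.update σ i b x)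
      = ∑ x ∈ Finset.univ.erase i, ((x.1 : ℤ) : ℝ) * mval 1 (σ x) :=
    Finset.sum_congr rfl fun x hx => by rw [Function.update_of_ne (Finset.ne_of_mem_erase hx)]
  rw [magMoment, magMoment, ← Finset.add_sum_erase _ _ (Finset.mem_univ i),
    ← Finset.add_sum_erase _ _ (Finset.mem_univ i), hrest, Function.update_self]
  ring

lemma magMoment_hop {σ : RSite R × Fin twoJ → Fin (1 + 1)} {p p' : RSite R × Fin twoJ}
    (hp : σ p = 0) (hp' : σ p' = 1) :
    magMoment (hop σ p p') = magMoment σ + ((p.1 : ℤ) : ℝ) - ((p'.1 : ℤ) : ℝ) := by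
  have hne : p' ≠ p := fun h => by simp [h, hp] at hp'
  rw [hop, magMoment_update, magMoment_update, Function.update_of_ne hne, hp, hp']
  norm_num [mval]
  ring

lemma Wsq_le_hop {q : ℝ} (hq0 : 0 < q) (hq1 : q < 1) {σ : RSite R × Fin twoJ → Fin (1 + 1)}
    {p p' : RSite R × Fin twoJ} (hp : σ p = 0) (hp' : σ p' = 1) (hpR : p ∈ rightRung twoJ R)
    (hp'L : p' ∈ leftHalf twoJ R) :
    Wsq q twoJ R σ ≤ q ^ (2 * R) * Wsq q twoJ R (hop σ p p') := by
  have hpR : ((p.1 : ℤ) : ℝ) = R := by exact_mod_cast (Finset.mem_filter.mp hpR).2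
  have hp'L : ((p'.1 : ℤ) : ℝ) ≤ 0 := by exact_mod_cast (Finset.mem_filter.mp hp'L).2
  rw [Wsq_eq_rpow_magMoment hq0, Wsq_eq_rpow_magMoment hq0, magMoment_hop hp hp',
    ← Real.rpow_natCast, ← Real.rpow_add hq0]
  apply Real.rpow_le_rpow_of_exponent_ge hq0 hq1.le
  push_cast
  linarith

lemma disjoint_leftHalf_rightRung : Disjoint (leftHalf twoJ R) (rightRung twoJ R) := by
  rw [Finset.disjoint_left]
  intro x hxL hxR
  have := Finset.mem_Icc.mp x.1.2
  simp only [leftHalf, rightRung, Finset.mem_filter] at hxL hxR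
  omega

lemma card_rightRung_le : (rightRung twoJ R).card ≤ twoJ := by
  have hrung : (Finset.univ.filter fun a : RSite R => (a : ℤ) = R).card ≤ 1 :=
    Finset.card_le_one.mpr fun a ha b hb =>
      Subtype.ext ((Finset.mem_filter.mp ha).2.trans (Finset.mem_filter.mp hb).2.symm)
  have hprod :
      rightRung twoJ R = (Finset.univ.filter fun a : RSite R => (a : ℤ) = R) ×ˢ Finset.univ := by
    ext; simp [rightRung]
  rw [hprod, Finset.card_product, Finset.card_univ, Fintype.card_fin]
  simpa using Nat.mul_le_mul_right twoJ hrung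

lemma card_leftHalf : (leftHalf twoJ R).card = R * twoJ := by
  have hhalf : (Finset.univ.filter fun a : RSite R => (a : ℤ) ≤ 0).card = R := by
    rw [← Finset.card_map (Function.Embedding.subtype _)]
    have hIcc : (Finset.univ.filter fun a : RSite R => (a : ℤ) ≤ 0).map
        (Function.Embedding.subtype _) = Finset.Icc (-(R : ℤ) + 1) 0 := by
      ext z
      simp only [Finset.univ_eq_attach, Finset.mem_map, Finset.mem_filter, Finset.mem_attach,
        true_and, Function.Embedding.subtype_apply, Subtype.exists, Finset.mem_Icc,
        exists_and_left, exists_prop, exists_eq_right_right]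
      omega
    rw [hIcc, Int.card_Icc]
    omega
  have hprod :
      leftHalf twoJ R = (Finset.univ.filter fun a : RSite R => (a : ℤ) ≤ 0) ×ˢ Finset.univ := by
    ext; simp [leftHalf]
  rw [hprod, Finset.card_product, hhalf, Finset.card_univ, Fintype.card_fin]

lemma exists_down_rightRung_up_leftHalf {σ : RSite R × Fin twoJ → Fin (1 + 1)}
    (hn : nDown twoJ R σ ≤ twoJ * R) (hj : 0 < jDownRight twoJ R σ) :
    ∃ p ∈ rightRung twoJ R, σ p = 0 ∧ ∃ p' ∈ leftHalf twoJ R, σ p' = 1 := by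
  set down := Finset.univ.filter fun x => σ x = 0
  rw [jDownRight_eq_card] at hj
  obtain ⟨p, hp⟩ := Finset.card_pos.mp hj
  refine ⟨p, (Finset.mem_inter.mp hp).2, (Finset.mem_filter.mp (Finset.mem_inter.mp hp).1).2, ?_⟩
  by_contra! hup
  have hsub : leftHalf twoJ R ∪ down ∩ rightRung twoJ R ⊆ down := by
    refine Finset.union_subset (fun x hx => ?_) Finset.inter_subset_left
    simpa [down] using Fin.eq_one_of_ne_zero _ |>.mt (hup x hx)
  have := Finset.card_le_card hsub
  rw [Finset.card_union_of_disjoint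
    (disjoint_leftHalf_rightRung.mono_right Finset.inter_subset_right), card_leftHalf] at this
  rw [nDown] at hn
  linarith [Nat.mul_comm R twoJ]

end Ladder

theorem Zsq_step_estimate_general (q : ℝ) (hq0 : 0 < q) (hq1 : q < 1)
    (twoJ : ℕ) (R : ℕ)
    (n : ℕ) (hn2 : n ≤ twoJ * R)
    (j : ℕ) :
    Zsq q twoJ R n (j + 1) ≤ (twoJ : ℝ) ^ 2 * R * q ^ (2 * R) * Zsq q twoJ R n j := by
  set B := Finset.univ.filter fun σ => nDown twoJ R σ = n ∧ jDownRight twoJ R σ = j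
  have hhop : ∀ σ ∈ Finset.univ.filter fun σ => nDown twoJ R σ = n ∧ jDownRight twoJ R σ = j + 1,
      ∃ x ∈ B ×ˢ (rightRung twoJ R ×ˢ leftHalf twoJ R),
        hop x.1 x.2.2 x.2.1 = σ ∧ Wsq q twoJ R σ ≤ q ^ (2 * R) * Wsq q twoJ R x.1 := by
    intro σ hσ
    obtain ⟨hn, hj⟩ := (Finset.mem_filter.mp hσ).2
    obtain ⟨p, hpR, hp, p', hp'L, hp'⟩ :=
      exists_down_rightRung_up_leftHalf (hn ▸ hn2) (by omega)
    refine ⟨(hop σ p p', p, p'), ?_, hop_hop_eq_self hp hp', Wsq_le_hop hq0 hq1 hp hp' hpR hp'L⟩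
    have := jDownRight_hop hp hp' hpR (Finset.disjoint_left.mp disjoint_leftHalf_rightRung hp'L)
    simp only [B, Finset.mem_product, Finset.mem_filter, Finset.mem_univ, true_and,
      nDown_hop hp hp', hn, hpR, hp'L, and_true]
    omega
  have hcard : ((rightRung twoJ R ×ˢ leftHalf twoJ R).card : ℝ) ≤ (twoJ : ℝ) ^ 2 * R := by
    rw [Finset.card_product, card_leftHalf]
    exact_mod_cast (Nat.mul_le_mul_right _ card_rightRung_le).trans_eq (by ring)
  calc Zsq q twoJ R n (j + 1)
      ≤ ((rightRung twoJ R ×ˢ leftHalf twoJ R).card : ℝ) *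
          (q ^ (2 * R) * ∑ τ ∈ B, Wsq q twoJ R τ) := by
        rw [Zsq, ← Finset.sum_filter, Finset.mul_sum, ← nsmul_eq_mul]
        exact Finset.sum_le_card_nsmul_sum_of_decode _ _
          (fun τ _ => mul_nonneg (pow_nonneg hq0.le _) (Wsq_pos hq0 τ).le) _ hhop
    _ ≤ (twoJ : ℝ) ^ 2 * R * (q ^ (2 * R) * ∑ τ ∈ B, Wsq q twoJ R τ) := by
        gcongr
        exact mul_nonneg (pow_nonneg hq0.le _) (Finset.sum_nonneg fun τ _ => (Wsq_pos hq0 τ).le)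
    _ = (twoJ : ℝ) ^ 2 * R * q ^ (2 * R) * Zsq q twoJ R n j := by
        rw [Zsq, ← Finset.sum_filter]; ring

/-- **The crude estimate**: `Z_{j+1}² ≤ 4J²R q^{2R} Z_j²` for `0 ≤ j ≤ 2J-1`. -/
theorem Zsq_step_estimate (q : ℝ) (hq0 : 0 < q) (hq1 : q < 1)
    (twoJ : ℕ) (h2J : 1 ≤ twoJ) (R : ℕ) (hR : 1 ≤ R)
    (n : ℕ) (hn1 : 1 ≤ n) (hn2 : n ≤ twoJ * R)
    (j : ℕ) (hj : j ≤ twoJ - 1) :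
    Zsq q twoJ R n (j + 1) ≤ (twoJ : ℝ) ^ 2 * R * q ^ (2 * R) * Zsq q twoJ R n j :=
  Zsq_step_estimate_general q hq0 hq1 twoJ R n hn2 j

end XXZ
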